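/- Let p = 2 and let L be a non-degenerate even lattice over ℤ₂ containing V = [[2,1],[1,2]] as an orthogonal direct summand. Then for every x ∈ ℤ₂^×, V contains a vector v with ⟨v,v⟩ ∈ 2ℤ₂^×, and the reflection T(v) lies in the kernel of O(L) → O(q(L)); the subgroup of {±1} × ℚ₂^×/(ℚ₂^×)² generated by the values (det T(v), θ₂(T(v))) over such v contains the subgroup J₂ generated by {1} × ℤ₂^×/(ℤ₂^×)² and (−1, 2 mod squares). -/

import Mathlib

/-!
For `v = e₁ + x e₂` one has `⟨v,v⟩ = 2(1 + x + x²)`, and `1 + x + x²` is a unit when `x` is.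
Hence the reflection `T(v) w = w - (⟨v,w⟩ / (1 + x + x²)) v` involves no division by `2`:
it moves every vector of the dual lattice by an element of `ℤ₂ v`.

At `x = -1` the value `(-1, 2(1 + x + x²))` is `(-1, 2)`. As `x` runs over `-1, 1, 3, 5`, the
unit `1 + x + x²` runs over all residues `1, 3, 5, 7` modulo `8`, and a unit `≡ 1 mod 8` is a
square by Hensel's lemma; so the product of the values at `x` and at `-1` realises every
element of `{1} × ℤ₂^×/(ℤ₂^×)²`.
-/

open Matrix

/-- The bilinear form on `ℚ₂ⁿ` associated to a Gram matrix `M` over `ℤ₂`. -/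
noncomputable def dyadicForm {n : Type*} [Fintype n] (M : Matrix n n ℤ_[2])
    (x y : n → ℚ_[2]) : ℚ_[2] :=
  dotProduct x ((M.map (PadicInt.Coe.ringHom : ℤ_[2] →+* ℚ_[2])).mulVec y)

/-- The lattice `ℤ₂ⁿ` inside `ℚ₂ⁿ`. -/
def dyadicIntVecs (n : Type*) : Set (n → ℚ_[2]) :=
  {x | ∀ i, ∃ a : ℤ_[2], (a : ℚ_[2]) = x i}

/-- The reflection `T(v) : w ↦ w − (2⟨v,w⟩/⟨v,v⟩)·v` on `ℚ₂ⁿ`. -/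
noncomputable def dyadicReflection {n : Type*} [Fintype n] (M : Matrix n n ℤ_[2])
    (v w : n → ℚ_[2]) : n → ℚ_[2] :=
  w - (2 * dyadicForm M v w / dyadicForm M v v) • v

namespace PadicInt

theorem coe_ringHom_apply {p : ℕ} [Fact p.Prime] (x : ℤ_[p]) : Coe.ringHom x = (x : ℚ_[p]) := rfl

@[simp, norm_cast]
theorem coe_ofNat {p : ℕ} [Fact p.Prime] (n : ℕ) [n.AtLeastTwo] :
    ((ofNat(n) : ℤ_[p]) : ℚ_[p]) = ofNat(n) :=
  map_ofNat Coe.ringHom n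

theorem isUnit_iff_toZMod_ne_zero {p : ℕ} [Fact p.Prime] (z : ℤ_[p]) :
    IsUnit z ↔ toZMod z ≠ 0 := by
  rw [Ne, ← RingHom.mem_ker, ker_toZMod, IsLocalRing.mem_maximalIdeal, mem_nonunits_iff, not_not]

theorem isUnit_one_add_self_add_sq {x : ℤ_[2]} (hx : IsUnit x) : IsUnit (1 + x + x ^ 2) := by
  rw [isUnit_iff_toZMod_ne_zero] at hx ⊢
  have key : ∀ s : ZMod 2, s ≠ 0 → 1 + s + s ^ 2 ≠ 0 := by decide
  simpa using key _ hx

theorem eight_dvd_sub_one_iff (b : ℤ_[2]) : 8 ∣ b - 1 ↔ toZModPow 3 b = 1 := by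
  rw [← sub_eq_zero, ← map_one (toZModPow 3), ← map_sub, ← RingHom.mem_ker, ker_toZModPow,
    Ideal.mem_span_singleton]
  norm_num

open Polynomial in
theorem isSquare_of_eight_dvd_sub_one {b : ℤ_[2]} (hb : 8 ∣ b - 1) : IsSquare b := by
  obtain ⟨c, hc⟩ := hb
  have hF : aeval (1 : ℤ_[2]) (X ^ 2 - C b) = -(8 * c) := by
    simp only [map_sub, aeval_X_pow, aeval_C, Algebra.algebraMap_self, RingHom.id_apply]
    linear_combination -hc
  have hF' : aeval (1 : ℤ_[2]) (derivative (X ^ 2 - C b)) = 2 := by norm_num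
  have h2 : ‖(2 : ℤ_[2])‖ = 2⁻¹ := by simpa using norm_p (p := 2)
  have h8 : ‖(8 : ℤ_[2])‖ = 8⁻¹ := by
    rw [show (8 : ℤ_[2]) = 2 ^ 3 by norm_num, norm_pow, h2]; norm_num
  have hnorm :
      ‖aeval (1 : ℤ_[2]) (X ^ 2 - C b)‖ < ‖aeval (1 : ℤ_[2]) (derivative (X ^ 2 - C b))‖ ^ 2 := by
    rw [hF, hF', norm_neg, norm_mul, h8, h2]
    nlinarith [norm_le_one c]
  obtain ⟨z, hz, -⟩ := hensels_lemma hnorm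
  exact ⟨z, by simpa [sub_eq_zero, sq, eq_comm] using hz⟩

theorem exists_mul_sq_eq_one_add_self_add_sq (a : ℤ_[2]ˣ) :
    ∃ x z : ℤ_[2]ˣ, (a * z ^ 2 : ℤ_[2]) = 1 + x + x ^ 2 := by
  have residues : ∀ r s : ZMod 8, r * s = 1 →
      ∃ k : Fin 8, ((k : ℕ) : ZMod 2) ≠ 0 ∧ (1 + (k : ℕ) + ((k : ℕ) : ZMod 8) ^ 2) * s = 1 := by
    decide
  obtain ⟨k, hk2, hk8⟩ :=
    residues (toZModPow 3 (a : ℤ_[2])) (toZModPow 3 ((a⁻¹ : ℤ_[2]ˣ) : ℤ_[2]))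
      (by rw [← map_mul, Units.mul_inv, map_one])
  set x : ℤ_[2] := ((k : ℕ) : ℤ_[2])
  have hx : IsUnit x := by rwa [isUnit_iff_toZMod_ne_zero, map_natCast]
  obtain ⟨z, hz⟩ : IsSquare ((1 + x + x ^ 2) * ((a⁻¹ : ℤ_[2]ˣ) : ℤ_[2])) :=
    isSquare_of_eight_dvd_sub_one <| (eight_dvd_sub_one_iff _).2 (by simpa [x] using hk8)
  have hzu : IsUnit z :=
    isUnit_of_mul_isUnit_left (hz ▸ (isUnit_one_add_self_add_sq hx).mul a⁻¹.isUnit)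
  refine ⟨hx.unit, hzu.unit, ?_⟩
  simp only [IsUnit.unit_spec]
  linear_combination (-(a : ℤ_[2])) * hz + (1 + x + x ^ 2) * a.mul_inv

end PadicInt

theorem sumElim_zero_dotProduct_fromBlocks_mulVec {R l m : Type*} [NonUnitalNonAssocSemiring R]
    [Fintype l] [Fintype m] (A : Matrix l l R) (B : Matrix l m R) (C : Matrix m l R)
    (D : Matrix m m R) (a : l → R) :
    Sum.elim a 0 ⬝ᵥ fromBlocks A B C D *ᵥ Sum.elim a 0 = a ⬝ᵥ A *ᵥ a := by
  simp [fromBlocks_mulVec, sumElim_dotProduct_sumElim]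

section Reflection

variable {ι : Type*} [Fintype ι] (M : Matrix ι ι ℤ_[2])

theorem dyadicForm_coe (a b : ι → ℤ_[2]) :
    dyadicForm M (fun i => (a i : ℚ_[2])) (fun i => (b i : ℚ_[2])) =
      ((a ⬝ᵥ M *ᵥ b : ℤ_[2]) : ℚ_[2]) := by
  simp [dyadicForm, dotProduct, mulVec, PadicInt.coe_ringHom_apply]

theorem dyadicForm_comm (hM : M.IsSymm) (x y : ι → ℚ_[2]) :
    dyadicForm M x y = dyadicForm M y x := by
  have hM' : (M.map (PadicInt.Coe.ringHom : ℤ_[2] →+* ℚ_[2]))ᵀ = M.map PadicInt.Coe.ringHom :=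
    IsSymm.map hM _
  rw [dyadicForm, dyadicForm, dotProduct_mulVec, ← mulVec_transpose, hM', dotProduct_comm]

omit [Fintype ι] in
theorem add_mem_dyadicIntVecs {x y : ι → ℚ_[2]} (hx : x ∈ dyadicIntVecs ι)
    (hy : y ∈ dyadicIntVecs ι) : x + y ∈ dyadicIntVecs ι := fun i => by
  obtain ⟨a, ha⟩ := hx i
  obtain ⟨b, hb⟩ := hy i
  exact ⟨a + b, by simp [ha, hb]⟩

variable {M} {v : ι → ℤ_[2]} {u : ℤ_[2]ˣ}

theorem dyadicReflection_sub_mem (hv : v ⬝ᵥ M *ᵥ v = 2 * u) {w : ι → ℚ_[2]} {c : ℤ_[2]}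
    (hc : dyadicForm M (fun i => (v i : ℚ_[2])) w = c) :
    dyadicReflection M (fun i => (v i : ℚ_[2])) w - w ∈ dyadicIntVecs ι := fun i => by
  have hinv : (((u⁻¹ : ℤ_[2]ˣ) : ℤ_[2]) : ℚ_[2]) = ((u : ℤ_[2]) : ℚ_[2])⁻¹ :=
    eq_inv_of_mul_eq_one_left (by exact_mod_cast congrArg ((↑) : ℤ_[2] → ℚ_[2]) u.inv_mul)
  refine ⟨-(c * (u⁻¹ : ℤ_[2]ˣ) * v i), ?_⟩
  rw [dyadicReflection, hc, dyadicForm_coe, hv]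
  push_cast [hinv, Pi.sub_apply, Pi.smul_apply, smul_eq_mul]
  field_simp
  ring

theorem dyadicReflection_mem (hv : v ⬝ᵥ M *ᵥ v = 2 * u) {w : ι → ℚ_[2]}
    (hw : w ∈ dyadicIntVecs ι) :
    dyadicReflection M (fun i => (v i : ℚ_[2])) w ∈ dyadicIntVecs ι := by
  choose b hb using hw
  obtain rfl : (fun i => (b i : ℚ_[2])) = w := funext hb
  simpa using add_mem_dyadicIntVecs (fun i => ⟨b i, rfl⟩)
    (dyadicReflection_sub_mem hv (dyadicForm_coe M v b))

theorem dyadicReflection_sub_mem_of_dual (hM : M.IsSymm) (hv : v ⬝ᵥ M *ᵥ v = 2 * u)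
    {w : ι → ℚ_[2]}
    (hw : ∀ y ∈ dyadicIntVecs ι, ∃ c : ℤ_[2], (c : ℚ_[2]) = dyadicForm M w y) :
    dyadicReflection M (fun i => (v i : ℚ_[2])) w - w ∈ dyadicIntVecs ι := by
  obtain ⟨c, hc⟩ := hw _ fun i => ⟨v i, rfl⟩
  exact dyadicReflection_sub_mem hv (by rw [dyadicForm_comm M hM, hc])

end Reflection

theorem QuotientGroup.mk_mul_sq {G : Type*} [CommGroup G] (a b : G) :
    (QuotientGroup.mk (a * b ^ 2) : G ⧸ (powMonoidHom 2 : G →* G).range) = QuotientGroup.mk a :=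
  QuotientGroup.eq.mpr ⟨b⁻¹, by simp [mul_comm]⟩

local notation "ℚ₂ˣ/□" => ℚ_[2]ˣ ⧸ MonoidHom.range (powMonoidHom 2 : ℚ_[2]ˣ →* ℚ_[2]ˣ)

noncomputable def J₂ : Subgroup (ℤˣ × ℚ₂ˣ/□) :=
  Subgroup.closure
    ({z | ∃ (a : ℤ_[2]ˣ) (u : ℚ_[2]ˣ), (u : ℚ_[2]) = ((a : ℤ_[2]) : ℚ_[2]) ∧
        z = ((1 : ℤˣ), QuotientGroup.mk u)} ∪
      {z | ∃ u : ℚ_[2]ˣ, (u : ℚ_[2]) = 2 ∧ z = ((-1 : ℤˣ), QuotientGroup.mk u)})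

theorem J₂_le_closure {S : Set (ℤˣ × ℚ₂ˣ/□)}
    (hS : ∀ (x : ℤ_[2]ˣ) (u : ℚ_[2]ˣ), (u : ℚ_[2]) = ((2 * (1 + x + x ^ 2) : ℤ_[2]) : ℚ_[2]) →
      ((-1 : ℤˣ), (u : ℚ₂ˣ/□)) ∈ S) :
    J₂ ≤ Subgroup.closure S := by
  have htwo : ∀ u : ℚ_[2]ˣ, (u : ℚ_[2]) = 2 → ((-1 : ℤˣ), (u : ℚ₂ˣ/□)) ∈ S := fun u hu =>
    hS (-1) u (by rw [hu]; norm_num)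
  rw [J₂, Subgroup.closure_le]
  rintro _ (⟨a, u, hu, rfl⟩ | ⟨u, hu, rfl⟩)
  · obtain ⟨x, z, hxz⟩ := PadicInt.exists_mul_sq_eq_one_add_self_add_sq a
    let t : ℚ_[2]ˣ := Units.mk0 2 two_ne_zero
    let zQ : ℚ_[2]ˣ := Units.map (PadicInt.Coe.ringHom : ℤ_[2] →+* ℚ_[2]) z
    have hx : ((-1 : ℤˣ), ((t * u * zQ ^ 2 : ℚ_[2]ˣ) : ℚ₂ˣ/□)) ∈ Subgroup.closure S :=
      Subgroup.subset_closure <| hS x _ <| by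
        rw [← hxz]
        push_cast [t, zQ, hu, Units.val_mk0, Units.coe_map, MonoidHom.coe_coe,
          PadicInt.coe_ringHom_apply]
        ring
    have h2 : ((-1 : ℤˣ), (t : ℚ₂ˣ/□)) ∈ Subgroup.closure S :=
      Subgroup.subset_closure (htwo t rfl)
    have hprod : ((1 : ℤˣ), (u : ℚ₂ˣ/□)) =
        ((-1 : ℤˣ), ((t * u * zQ ^ 2 : ℚ_[2]ˣ) : ℚ₂ˣ/□)) * ((-1 : ℤˣ), (t : ℚ₂ˣ/□)) := by
      refine Prod.ext (by simp) ?_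
      change (u : ℚ₂ˣ/□) = ((t * u * zQ ^ 2 * t : ℚ_[2]ˣ) : ℚ₂ˣ/□)
      rw [show t * u * zQ ^ 2 * t = u * (t * zQ) ^ 2 by simp only [sq]; ac_rfl,
        QuotientGroup.mk_mul_sq]
    rw [hprod]
    exact Subgroup.mul_mem _ hx h2
  · exact Subgroup.subset_closure (htwo u hu)

theorem dyadic_V_reflections_general
    {n : ℕ}
    (M' : Matrix (Fin n) (Fin n) ℤ_[2]) (hsymm : M'.transpose = M') :
    letI M : Matrix (Fin 2 ⊕ Fin n) (Fin 2 ⊕ Fin n) ℤ_[2] :=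
      Matrix.fromBlocks !![(2 : ℤ_[2]), 1; 1, 2] 0 0 M'
    letI vx : ℤ_[2]ˣ → (Fin 2 ⊕ Fin n) → ℤ_[2] :=
      fun x => Sum.elim ![1, (x : ℤ_[2])] 0
    letI vxQ : ℤ_[2]ˣ → (Fin 2 ⊕ Fin n) → ℚ_[2] :=
      fun x i => ((vx x i : ℤ_[2]) : ℚ_[2])
    letI sq : Subgroup ℚ_[2]ˣ := (powMonoidHom 2 : ℚ_[2]ˣ →* ℚ_[2]ˣ).range
    (∀ x : ℤ_[2]ˣ,
      dotProduct (vx x) (M.mulVec (vx x)) = 2 + 2 * (x : ℤ_[2]) + 2 * (x : ℤ_[2]) ^ 2 ∧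
      ∃ u : ℤ_[2]ˣ, dotProduct (vx x) (M.mulVec (vx x)) = 2 * (u : ℤ_[2])) ∧
    (∀ x : ℤ_[2]ˣ,
      (∀ w ∈ dyadicIntVecs (Fin 2 ⊕ Fin n),
        dyadicReflection M (vxQ x) w ∈ dyadicIntVecs (Fin 2 ⊕ Fin n)) ∧
      (∀ w : (Fin 2 ⊕ Fin n) → ℚ_[2],
        (∀ y ∈ dyadicIntVecs (Fin 2 ⊕ Fin n),
          ∃ c : ℤ_[2], (c : ℚ_[2]) = dyadicForm M w y) →
        dyadicReflection M (vxQ x) w - w ∈ dyadicIntVecs (Fin 2 ⊕ Fin n))) ∧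
    Subgroup.closure
        ({z : ℤˣ × (ℚ_[2]ˣ ⧸ sq) |
          ∃ (a : ℤ_[2]ˣ) (u : ℚ_[2]ˣ), (u : ℚ_[2]) = ((a : ℤ_[2]) : ℚ_[2]) ∧
            z = ((1 : ℤˣ), QuotientGroup.mk u)} ∪
         {z | ∃ u : ℚ_[2]ˣ, (u : ℚ_[2]) = 2 ∧ z = ((-1 : ℤˣ), QuotientGroup.mk u)}) ≤
      Subgroup.closure
        {z : ℤˣ × (ℚ_[2]ˣ ⧸ sq) |
          ∃ (x : ℤ_[2]ˣ) (u : ℚ_[2]ˣ),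
            (u : ℚ_[2]) = ((dotProduct (vx x) (M.mulVec (vx x)) : ℤ_[2]) : ℚ_[2]) ∧
            z = ((-1 : ℤˣ), QuotientGroup.mk u)} := by
  set M := fromBlocks !![(2 : ℤ_[2]), 1; 1, 2] 0 0 M'
  set vx : ℤ_[2]ˣ → Fin 2 ⊕ Fin n → ℤ_[2] := fun x => Sum.elim ![1, (x : ℤ_[2])] 0
  have hnorm : ∀ x : ℤ_[2]ˣ, vx x ⬝ᵥ M *ᵥ vx x = 2 * (1 + x + x ^ 2) := fun x => by
    rw [sumElim_zero_dotProduct_fromBlocks_mulVec]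
    simp only [mulVec_cons, one_smul, mulVec_empty, add_zero, dotProduct_add, cons_dotProduct,
      vecHead, Function.comp_apply, cons_val', cons_val_zero, cons_val_fin_one, one_mul, vecTail,
      Fin.succ_zero_eq_one, cons_val_one, mul_one, dotProduct_of_isEmpty, dotProduct_smul,
      smul_eq_mul]
    ring
  have hunit : ∀ x : ℤ_[2]ˣ,
      vx x ⬝ᵥ M *ᵥ vx x = 2 * (PadicInt.isUnit_one_add_self_add_sq x.isUnit).unit := fun x => by
    rw [hnorm, IsUnit.unit_spec]
  have hM : M.IsSymm :=
    IsSymm.fromBlocks (IsSymm.ext fun i j => by fin_cases i <;> fin_cases j <;> rfl) (by simp) hsymm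
  refine ⟨fun x => ⟨by rw [hnorm]; ring, _, hunit x⟩,
    fun x => ⟨fun w hw => dyadicReflection_mem (hunit x) hw,
      fun w hw => dyadicReflection_sub_mem_of_dual hM (hunit x) hw⟩, ?_⟩
  exact J₂_le_closure fun x u hu => ⟨x, u, by rw [hu, hnorm], rfl⟩

/-- Let `L` be a non-degenerate even lattice over `ℤ₂` containing
`V = [[2,1],[1,2]]` as an orthogonal direct summand, with Gram matrix `V ⊕ M'`.
For every `x ∈ ℤ₂^×` the vector `v = e₁ + x·e₂ ∈ V` has
`⟨v,v⟩ = 2 + 2x + 2x² ∈ 2ℤ₂^×`; the reflection `T(v)` preserves `L` and lies in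
the kernel of `O(L) → O(q(L))` (it acts trivially on `L^∨/L`); and the subgroup of
`{±1} × ℚ₂^×/(ℚ₂^×)²` generated by the values
`(det T(v), θ₂(T(v))) = (−1, ⟨v,v⟩ mod squares)` contains the subgroup `J₂`
generated by `{1} × ℤ₂^×/(ℤ₂^×)²` and `(−1, 2 mod squares)`. -/
theorem dyadic_V_reflections
    {n : ℕ}
    (M' : Matrix (Fin n) (Fin n) ℤ_[2]) (hsymm : M'.transpose = M')
    (heven : ∀ i, ∃ a : ℤ_[2], M' i i = 2 * a)
    (hdet : (Matrix.fromBlocks !![(2 : ℤ_[2]), 1; 1, 2] 0 0 M').det ≠ 0) :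
    letI M : Matrix (Fin 2 ⊕ Fin n) (Fin 2 ⊕ Fin n) ℤ_[2] :=
      Matrix.fromBlocks !![(2 : ℤ_[2]), 1; 1, 2] 0 0 M'
    letI vx : ℤ_[2]ˣ → (Fin 2 ⊕ Fin n) → ℤ_[2] :=
      fun x => Sum.elim ![1, (x : ℤ_[2])] 0
    letI vxQ : ℤ_[2]ˣ → (Fin 2 ⊕ Fin n) → ℚ_[2] :=
      fun x i => ((vx x i : ℤ_[2]) : ℚ_[2])
    letI sq : Subgroup ℚ_[2]ˣ := (powMonoidHom 2 : ℚ_[2]ˣ →* ℚ_[2]ˣ).range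
    (∀ x : ℤ_[2]ˣ,
      dotProduct (vx x) (M.mulVec (vx x)) = 2 + 2 * (x : ℤ_[2]) + 2 * (x : ℤ_[2]) ^ 2 ∧
      ∃ u : ℤ_[2]ˣ, dotProduct (vx x) (M.mulVec (vx x)) = 2 * (u : ℤ_[2])) ∧
    (∀ x : ℤ_[2]ˣ,
      (∀ w ∈ dyadicIntVecs (Fin 2 ⊕ Fin n),
        dyadicReflection M (vxQ x) w ∈ dyadicIntVecs (Fin 2 ⊕ Fin n)) ∧
      (∀ w : (Fin 2 ⊕ Fin n) → ℚ_[2],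
        (∀ y ∈ dyadicIntVecs (Fin 2 ⊕ Fin n),
          ∃ c : ℤ_[2], (c : ℚ_[2]) = dyadicForm M w y) →
        dyadicReflection M (vxQ x) w - w ∈ dyadicIntVecs (Fin 2 ⊕ Fin n))) ∧
    Subgroup.closure
        ({z : ℤˣ × (ℚ_[2]ˣ ⧸ sq) |
          ∃ (a : ℤ_[2]ˣ) (u : ℚ_[2]ˣ), (u : ℚ_[2]) = ((a : ℤ_[2]) : ℚ_[2]) ∧
            z = ((1 : ℤˣ), QuotientGroup.mk u)} ∪
         {z | ∃ u : ℚ_[2]ˣ, (u : ℚ_[2]) = 2 ∧ z = ((-1 : ℤˣ), QuotientGroup.mk u)}) ≤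
      Subgroup.closure
        {z : ℤˣ × (ℚ_[2]ˣ ⧸ sq) |
          ∃ (x : ℤ_[2]ˣ) (u : ℚ_[2]ˣ),
            (u : ℚ_[2]) = ((dotProduct (vx x) (M.mulVec (vx x)) : ℤ_[2]) : ℚ_[2]) ∧
            z = ((-1 : ℤˣ), QuotientGroup.mk u)} :=
  dyadic_V_reflections_general M' hsymm
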